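/- arXiv:0903.1722 — 2 statements merged into one kernel-verified Lean document; each statement's English description precedes it below -/
import Mathlib

section
/- Let n, m, j ∈ ℕ with 1 ≤ j ≤ m ≤ n, and let t1, t2, t4 ∈ ℂ. Assume t1+t2, t1+t4, and t1+1−t4−m all lie outside {0, −1, …, −(n−1)}, and that t1+t2 ∉ {0, −1, …, −(2n−m−1)}. Then W_n(t4+j−1; t1, t2, 1−t4−m, t4) = 0; that is, in the variable x = −z², the Wilson polynomial with third parameter 1−t4−m vanishes at the m points x = −(t4+j−1)², j = 1, …, m. -/
/-!
With `t3 = 1 - t4 - m` and `z = t4 + j - 1`, the numerator parameters of the Wilson sum are the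
denominator parameters `t1 + t2`, `t1 + t4`, `t1 + t3` shifted by the naturals `n - m`, `j - 1`,
`m - j`. Since `(u + s)_k / (u)_k = (u + k)_s / (u)_s`, the `k`-th term becomes
`(-1)^k C(n, k) R(k)` up to a constant factor, for a polynomial `R` of degree
`(n - m) + (j - 1) + (m - j) = n - 1`, and the `n`-th finite difference of a polynomial of degree
`< n` vanishes.
-/

open Finset

/-- Pochhammer symbol `(a)_k = a (a+1) ⋯ (a+k-1)`. -/
noncomputable def poch (a : ℂ) (k : ℕ) : ℂ := ∏ i ∈ Finset.range k, (a + i)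

/-- The Wilson polynomial `W_n(z; t1,t2,t3,t4)` in the variable `z` (with `x = -z²`). -/
noncomputable def wilson (n : ℕ) (z t1 t2 t3 t4 : ℂ) : ℂ :=
  poch (t1 + t2) n * poch (t1 + t3) n * poch (t1 + t4) n *
    ∑ k ∈ Finset.range (n + 1),
      (poch (-(n : ℂ)) k * poch (t1 + t2 + t3 + t4 + (n : ℂ) - 1) k *
        poch (t1 + z) k * poch (t1 - z) k) /
      ((k.factorial : ℂ) * poch (t1 + t2) k * poch (t1 + t3) k * poch (t1 + t4) k)

open Polynomial

lemma poch_ne_zero {a : ℂ} {k n : ℕ} (h : ∀ i < n, a + i ≠ 0) (hk : k ≤ n) : poch a k ≠ 0 :=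
  prod_ne_zero_iff.2 fun i hi => h i ((mem_range.1 hi).trans_le hk)

lemma poch_add (a : ℂ) (s t : ℕ) : poch a (s + t) = poch a s * poch (a + s) t := by
  unfold poch
  rw [prod_range_add]
  congr 1
  exact prod_congr rfl fun i _ => by push_cast; ring

lemma poch_mul_poch_add_comm (a : ℂ) (s k : ℕ) :
    poch a s * poch (a + s) k = poch a k * poch (a + k) s := by
  rw [← poch_add, ← poch_add, Nat.add_comm]

lemma poch_neg_natCast {n k : ℕ} (hk : k ≤ n) :
    poch (-(n : ℂ)) k = (-1) ^ k * k.factorial * n.choose k := by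
  have hfactor : ∀ i ∈ range k, -(n : ℂ) + i = -1 * ((n - i : ℕ) : ℂ) := fun i hi => by
    rw [Nat.cast_sub (by have := mem_range.1 hi; omega)]
    ring
  rw [poch, prod_congr rfl hfactor, prod_mul_distrib, prod_const, card_range, ← Nat.cast_prod,
    ← Nat.descFactorial_eq_prod_range, Nat.descFactorial_eq_factorial_mul_choose]
  push_cast
  ring

lemma exists_natDegree_le_eval_eq_poch (u : ℂ) (s : ℕ) :
    ∃ P : ℂ[X], P.natDegree ≤ s ∧ ∀ x, P.eval x = poch (u + x) s := by
  refine ⟨∏ i ∈ range s, (X + C (u + i)), ?_, fun x => ?_⟩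
  · refine (natDegree_prod_le _ _).trans ?_
    simp only [natDegree_X_add_C, sum_const, card_range, smul_eq_mul, mul_one, le_refl]
  · rw [eval_prod]
    exact prod_congr rfl fun i _ => by simp only [eval_add, eval_X, eval_C]; ring

theorem Polynomial.sum_range_neg_one_pow_mul_choose_mul_eval_eq_zero {R : Type*} [CommRing R]
    {n : ℕ} (P : R[X]) (hP : P.natDegree < n) :
    ∑ k ∈ range (n + 1), (-1) ^ k * (n.choose k : R) * P.eval (k : R) = 0 := by
  have hdiff := congr_fun (fwdDiff_iter_eq_zero_of_degree_lt hP) 0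
  rw [fwdDiff_iter_eq_sum_shift] at hdiff
  calc ∑ k ∈ range (n + 1), (-1) ^ k * (n.choose k : R) * P.eval (k : R)
      = (-1) ^ n * ∑ k ∈ range (n + 1),
          ((-1 : ℤ) ^ (n - k) * n.choose k) • P.eval (0 + k • (1 : R)) := by
        rw [mul_sum]
        refine sum_congr rfl fun k hk => ?_
        have hsign : (-1 : R) ^ n * (-1) ^ (n - k) = (-1) ^ k := by
          obtain ⟨d, rfl⟩ := Nat.exists_eq_add_of_le (Nat.lt_succ_iff.1 (mem_range.1 hk))
          rw [Nat.add_sub_cancel_left, pow_add, mul_assoc, ← mul_pow, neg_one_mul, neg_neg,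
            one_pow, mul_one]
        simp only [zsmul_eq_mul, zero_add, nsmul_eq_mul, mul_one]
        push_cast
        rw [← hsign]
        ring
    _ = 0 := by rw [hdiff, Pi.zero_apply, mul_zero]

lemma sum_range_neg_one_pow_mul_choose_mul_poch_eq_zero {n p q r : ℕ} (hpqr : p + q + r < n)
    (u v w : ℂ) :
    ∑ k ∈ range (n + 1), (-1) ^ k * (n.choose k : ℂ) *
      (poch (u + k) p * poch (v + k) q * poch (w + k) r) = 0 := by
  obtain ⟨P, hPdeg, hP⟩ := exists_natDegree_le_eval_eq_poch u p
  obtain ⟨Q, hQdeg, hQ⟩ := exists_natDegree_le_eval_eq_poch v q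
  obtain ⟨R, hRdeg, hR⟩ := exists_natDegree_le_eval_eq_poch w r
  have hdeg : (P * Q * R).natDegree < n :=
    calc (P * Q * R).natDegree ≤ P.natDegree + Q.natDegree + R.natDegree :=
          natDegree_mul_le.trans (by gcongr; exact natDegree_mul_le)
      _ < n := by omega
  simpa only [eval_mul, hP, hQ, hR] using sum_range_neg_one_pow_mul_choose_mul_eval_eq_zero _ hdeg

lemma wilson_summand_eq {n k : ℕ} (hk : k ≤ n) {a b c : ℂ} {s p q : ℕ}
    (hck : poch c k ≠ 0) (hbk : poch b k ≠ 0) (hak : poch a k ≠ 0)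
    (hcs : poch c s ≠ 0) (hap : poch a p ≠ 0) (hbq : poch b q ≠ 0) :
    poch (-(n : ℂ)) k * poch (c + s) k * poch (a + p) k * poch (b + q) k /
        ((k.factorial : ℂ) * poch c k * poch b k * poch a k) =
      (-1) ^ k * (n.choose k : ℂ) * (poch (c + k) s * poch (a + k) p * poch (b + k) q) /
        (poch c s * poch a p * poch b q) := by
  have hfact : (k.factorial : ℂ) ≠ 0 := Nat.cast_ne_zero.2 k.factorial_ne_zero
  rw [poch_neg_natCast hk, div_eq_div_iff (by simp [*]) (by simp [*])]
  have hswap : poch c s * poch (c + s) k * (poch a p * poch (a + p) k) *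
      (poch b q * poch (b + q) k) = poch c k * poch (c + k) s * (poch a k * poch (a + k) p) *
      (poch b k * poch (b + k) q) := by
    rw [poch_mul_poch_add_comm c, poch_mul_poch_add_comm a, poch_mul_poch_add_comm b]
  linear_combination (-1) ^ k * (k.factorial : ℂ) * (n.choose k : ℂ) * hswap

theorem wilson_diophantine_zeros_general (n m j : ℕ) (hj : 1 ≤ j) (hjm : j ≤ m) (hmn : m ≤ n)
    (t1 t2 t4 : ℂ)
    (h12 : ∀ k : ℕ, k < n → t1 + t2 + k ≠ 0)
    (h14 : ∀ k : ℕ, k < n → t1 + t4 + k ≠ 0)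
    (h13 : ∀ k : ℕ, k < n → t1 + 1 - t4 - (m : ℂ) + k ≠ 0) :
    wilson n (t4 + (j : ℂ) - 1) t1 t2 (1 - t4 - (m : ℂ)) t4 = 0 := by
  have hshift_c : t1 + t2 + (1 - t4 - m) + t4 + n - 1 = t1 + t2 + ((n - m : ℕ) : ℂ) := by
    rw [Nat.cast_sub hmn]; ring
  have hshift_a : t1 + (t4 + j - 1) = t1 + t4 + ((j - 1 : ℕ) : ℂ) := by
    rw [Nat.cast_sub hj]; push_cast; ring
  have hshift_b : t1 - (t4 + j - 1) = t1 + 1 - t4 - m + ((m - j : ℕ) : ℂ) := by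
    rw [Nat.cast_sub hjm]; ring
  have hb : t1 + (1 - t4 - m) = t1 + 1 - t4 - m := by ring
  have hterm (k : ℕ) (hk : k ∈ range (n + 1)) := by
    have hkn : k ≤ n := Nat.lt_succ_iff.1 (mem_range.1 hk)
    exact wilson_summand_eq (s := n - m) (p := j - 1) (q := m - j) hkn
      (poch_ne_zero h12 hkn) (poch_ne_zero h13 hkn) (poch_ne_zero h14 hkn)
      (poch_ne_zero h12 (Nat.sub_le n m)) (poch_ne_zero h14 (by omega))
      (poch_ne_zero h13 (by omega))
  unfold wilson
  rw [hshift_c, hshift_a, hshift_b, hb, sum_congr rfl hterm, ← sum_div,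
    sum_range_neg_one_pow_mul_choose_mul_poch_eq_zero (by omega), zero_div, mul_zero]

theorem wilson_diophantine_zeros (n m j : ℕ) (hj : 1 ≤ j) (hjm : j ≤ m) (hmn : m ≤ n)
    (t1 t2 t4 : ℂ)
    (h12 : ∀ k : ℕ, k < n → t1 + t2 + k ≠ 0)
    (h14 : ∀ k : ℕ, k < n → t1 + t4 + k ≠ 0)
    (h13 : ∀ k : ℕ, k < n → t1 + 1 - t4 - (m : ℂ) + k ≠ 0)
    (h12' : ∀ k : ℕ, k < 2 * n - m → t1 + t2 + k ≠ 0) :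
    wilson n (t4 + (j : ℂ) - 1) t1 t2 (1 - t4 - (m : ℂ)) t4 = 0 :=
  wilson_diophantine_zeros_general n m j hj hjm hmn t1 t2 t4 h12 h14 h13
end

section
/- (q-Diophantine zeros of the Askey–Wilson polynomial.) Let n, m, j ∈ ℕ with 1 ≤ j ≤ m ≤ n, and let q, t1, t2, t4 ∈ ℂ with q ≠ 0, t1 ≠ 0, t2 ≠ 0, t4 ≠ 0. Set t3 = q^{1−m}/t4 and u_j = t4 q^{j−1}. Assume (q;q)_k ≠ 0, (t1t2;q)_k ≠ 0, (t1t4;q)_k ≠ 0, and (q^{1−m}t1/t4;q)_k ≠ 0 for all k ≤ n, with additionally (t1t2;q)_{n−m} ≠ 0, and assume (t2 q/t4;q)_k ≠ 0 and (q^m t2t4;q)_k ≠ 0 for all k ≤ n−m. Then p_n(u_j; t1, t2, q^{1−m}/t4, t4 | q) = 0; that is, in the variable x = (u+1/u)/2, the Askey–Wilson polynomial vanishes at the m explicit points x_j = (t4 q^{j−1} + t4^{−1} q^{1−j})/2, j = 1, …, m. -/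
/-!
Since `(a q^s;q)_k / (a;q)_k = (a q^k;q)_s / (a;q)_s` is a polynomial of degree `s` in `q^k`,
a terminating `₄φ₃` whose numerator parameters are its denominator parameters shifted by
`q^{s₁}, q^{s₂}, q^{s₃}` is a sum `∑_k (q^{-n};q)_k q^k P(q^k) / (q;q)_k` with `deg P = s₁ + s₂ + s₃`.
Such a sum vanishes when `deg P < n`: by the terminating q-binomial theorem
`∑_k (q^{-n};q)_k z^k / (q;q)_k = (q^{-n} z;q)_n`, which is zero at `z = q, …, q^n`.
At `t3 = q^{1-m}/t4`, `u = t4 q^{j-1}` the Askey–Wilson `₄φ₃` is of this form, with shifts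
`n - m`, `j - 1`, `m - j` of `t1t2`, `t1t4`, `t1t3`.
-/

open Finset

/-- q-shifted factorial `(a;q)_k = ∏_{j=0}^{k-1} (1 - a q^j)`. -/
noncomputable def qpoch (a q : ℂ) (k : ℕ) : ℂ := ∏ i ∈ Finset.range k, (1 - a * q ^ i)

/-- The Askey–Wilson polynomial `p_n(u; t1,t2,t3,t4 | q)` in the variable `u`
(`u` plays the role of `e^{iθ}`, so `x = (u + 1/u)/2 = cos θ`). -/
noncomputable def askeyWilson (q : ℂ) (n : ℕ) (u t1 t2 t3 t4 : ℂ) : ℂ :=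
  t1 ^ (-(n : ℤ)) * qpoch (t1 * t2) q n * qpoch (t1 * t3) q n * qpoch (t1 * t4) q n *
    ∑ k ∈ Finset.range (n + 1),
      (qpoch (q ^ (-(n : ℤ))) q k * qpoch (t1 * t2 * t3 * t4 * q ^ ((n : ℤ) - 1)) q k *
        qpoch (t1 * u) q k * qpoch (t1 / u) q k * q ^ k) /
      (qpoch q q k * qpoch (t1 * t2) q k * qpoch (t1 * t3) q k * qpoch (t1 * t4) q k)

open Polynomial

section QPochhammer

variable (a q : ℂ)

@[simp]
lemma qpoch_zero : qpoch a q 0 = 1 := prod_range_zero _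

lemma qpoch_succ (k : ℕ) : qpoch a q (k + 1) = qpoch a q k * (1 - a * q ^ k) :=
  prod_range_succ _ _

lemma qpoch_add (s k : ℕ) : qpoch a q (s + k) = qpoch a q s * qpoch (a * q ^ s) q k := by
  simp only [qpoch, prod_range_add, pow_add, mul_assoc]

lemma qpoch_succ' (k : ℕ) : qpoch a q (k + 1) = (1 - a) * qpoch (a * q) q k := by
  rw [add_comm, qpoch_add, pow_one]
  simp [qpoch]

lemma qpoch_mul_pow_mul_qpoch_comm (s k : ℕ) :
    qpoch (a * q ^ s) q k * qpoch a q s = qpoch (a * q ^ k) q s * qpoch a q k := by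
  rw [mul_comm, ← qpoch_add, mul_comm, ← qpoch_add, add_comm]

lemma qpoch_eq_zero_of_mul_pow_eq_one {n i : ℕ} (hi : i < n) (h : a * q ^ i = 1) :
    qpoch a q n = 0 :=
  prod_eq_zero (mem_range.mpr hi) (by rw [h, sub_self])

noncomputable def qpochPolynomial (s : ℕ) : ℂ[X] := ∏ i ∈ range s, (1 - C (a * q ^ i) * X)

lemma eval_qpochPolynomial (s : ℕ) (x : ℂ) :
    (qpochPolynomial a q s).eval x = qpoch (a * x) q s := by
  simp only [qpochPolynomial, qpoch, eval_prod, eval_sub, eval_one, eval_mul, eval_C, eval_X]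
  exact prod_congr rfl fun i _ => by ring

lemma natDegree_qpochPolynomial_le (s : ℕ) : (qpochPolynomial a q s).natDegree ≤ s := by
  unfold qpochPolynomial
  have h : ∀ i ∈ range s, (1 - C (a * q ^ i) * X).natDegree ≤ 1 := fun i _ =>
    (natDegree_sub_le _ _).trans (max_le (by simp) ((natDegree_C_mul_le _ _).trans natDegree_X_le))
  simpa using (natDegree_prod_le (range s) _).trans (sum_le_sum h)

lemma qpoch_mul_pow_div_qpoch {s k : ℕ} (hs : qpoch a q s ≠ 0) (hk : qpoch a q k ≠ 0) :
    qpoch (a * q ^ s) q k / qpoch a q k = (qpochPolynomial a q s).eval (q ^ k) / qpoch a q s := by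
  rw [eval_qpochPolynomial, div_eq_div_iff hk hs, qpoch_mul_pow_mul_qpoch_comm]

end QPochhammer

section QBinomial

variable {q : ℂ}

lemma qpoch_contiguous {A : ℂ} {k : ℕ} (hk : qpoch q q (k + 1) ≠ 0) (w : ℂ) :
    qpoch A q (k + 1) * (q * w) ^ (k + 1) / qpoch q q (k + 1) =
      qpoch (A * q) q (k + 1) * w ^ (k + 1) / qpoch q q (k + 1) -
        w * (qpoch (A * q) q k * w ^ k / qpoch q q k) := by
  rw [qpoch_succ q q] at hk ⊢
  have hq : qpoch q q k ≠ 0 := left_ne_zero_of_mul hk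
  have hq' : 1 - q * q ^ k ≠ 0 := right_ne_zero_of_mul hk
  rw [qpoch_succ', qpoch_succ (A * q)]
  field_simp
  ring

theorem sum_qpoch_mul_pow_div_qpoch {n : ℕ} (hqq : ∀ k ≤ n, qpoch q q k ≠ 0) {A : ℂ}
    (hA : A * q ^ n = 1) (z : ℂ) :
    ∑ k ∈ range (n + 1), qpoch A q k * z ^ k / qpoch q q k = qpoch (A * z) q n := by
  induction n generalizing A z with
  | zero => simp
  | succ n ih =>
    have hq : q ≠ 0 := by rintro rfl; simp at hA
    obtain ⟨w, rfl⟩ : ∃ w, z = q * w := ⟨z / q, by field_simp⟩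
    have hAq : A * q * q ^ n = 1 := by rw [mul_assoc, ← pow_succ']; exact hA
    set f : ℕ → ℂ := fun k => qpoch (A * q) q k * w ^ k / qpoch q q k
    have hf : f (n + 1) = 0 := by
      simp [f, qpoch_eq_zero_of_mul_pow_eq_one _ _ (Nat.lt_succ_self n) hAq]
    have hsum : ∑ k ∈ range (n + 1), f k = qpoch (A * q * w) q n :=
      ih (fun k hk => hqq k (by omega)) hAq w
    calc ∑ k ∈ range (n + 1 + 1), qpoch A q k * (q * w) ^ k / qpoch q q k
        = ∑ k ∈ range (n + 1), (f (k + 1) - w * f k) + 1 := by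
          rw [sum_range_succ']
          simp only [f]
          congr 1
          · exact sum_congr rfl fun k hk =>
              qpoch_contiguous (hqq (k + 1) (by simp at hk; omega)) w
          · simp
      _ = (1 - w) * ∑ k ∈ range (n + 1), f k := by
          rw [sum_sub_distrib, ← mul_sum, sum_range_succ' f, sum_range_succ, hf]
          simp [f]
          ring
      _ = qpoch (A * (q * w)) q (n + 1) := by
          rw [hsum, qpoch_succ, ← mul_assoc]
          linear_combination qpoch (A * q * w) q n * w * hAq

end QBinomial

section Vanishing

variable {q A : ℂ} {n : ℕ}

theorem sum_qpoch_mul_eval_div_qpoch_eq_zero (hqq : ∀ k ≤ n, qpoch q q k ≠ 0)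
    (hA : A * q ^ n = 1) {P : ℂ[X]} (hP : P.natDegree < n) :
    ∑ k ∈ range (n + 1), qpoch A q k * q ^ k / qpoch q q k * P.eval (q ^ k) = 0 := by
  have hmonomial : ∀ l < n,
      ∑ k ∈ range (n + 1), qpoch A q k * (q ^ (l + 1)) ^ k / qpoch q q k = 0 := fun l hl => by
    rw [sum_qpoch_mul_pow_div_qpoch hqq hA]
    refine qpoch_eq_zero_of_mul_pow_eq_one _ _ (Nat.sub_lt_self (by omega) hl) ?_
    rw [mul_assoc, ← pow_add, Nat.add_sub_cancel' hl, hA]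
  simp_rw [eval_eq_sum_range' hP, mul_sum]
  rw [sum_comm]
  refine sum_eq_zero fun l hl => ?_
  rw [← mul_zero (P.coeff l), ← hmonomial l (mem_range.1 hl), mul_sum]
  exact sum_congr rfl fun k _ => by ring

theorem sum_qpoch_mul_prod_qpoch_mul_pow_div_qpoch_eq_zero {ι : Type*} (I : Finset ι)
    (a : ι → ℂ) (s : ι → ℕ) (hs : ∑ i ∈ I, s i < n) (hqq : ∀ k ≤ n, qpoch q q k ≠ 0)
    (ha : ∀ i ∈ I, ∀ k ≤ n, qpoch (a i) q k ≠ 0) (hA : A * q ^ n = 1) :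
    ∑ k ∈ range (n + 1), qpoch A q k * q ^ k / qpoch q q k *
      ∏ i ∈ I, qpoch (a i * q ^ s i) q k / qpoch (a i) q k = 0 := by
  have hsn : ∀ i ∈ I, s i ≤ n := fun i hi =>
    (single_le_sum (fun _ _ => Nat.zero_le _) hi).trans hs.le
  set P : ℂ[X] := C (∏ i ∈ I, qpoch (a i) q (s i))⁻¹ * ∏ i ∈ I, qpochPolynomial (a i) q (s i)
  have hP : P.natDegree < n :=
    ((natDegree_C_mul_le _ _).trans ((natDegree_prod_le _ _).trans
      (sum_le_sum fun i _ => natDegree_qpochPolynomial_le _ _ _))).trans_lt hs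
  rw [← sum_qpoch_mul_eval_div_qpoch_eq_zero hqq hA hP]
  refine sum_congr rfl fun k hk => ?_
  have hk : k ≤ n := Nat.lt_succ_iff.1 (mem_range.1 hk)
  rw [prod_congr rfl fun i hi =>
    qpoch_mul_pow_div_qpoch _ _ (ha i hi _ (hsn i hi)) (ha i hi _ hk), prod_div_distrib]
  simp [P, eval_prod, div_eq_inv_mul]

end Vanishing

theorem askeyWilson_eq_zero_of_eq_mul_pow {n s₁ s₂ s₃ : ℕ} (hs : s₁ + s₂ + s₃ < n)
    {q u t1 t2 t3 t4 : ℂ} (hq : q ≠ 0) (hqq : ∀ k ≤ n, qpoch q q k ≠ 0)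
    (h12 : ∀ k ≤ n, qpoch (t1 * t2) q k ≠ 0) (h13 : ∀ k ≤ n, qpoch (t1 * t3) q k ≠ 0)
    (h14 : ∀ k ≤ n, qpoch (t1 * t4) q k ≠ 0)
    (hbalanced : t1 * t2 * t3 * t4 * q ^ ((n : ℤ) - 1) = t1 * t2 * q ^ s₁)
    (hu : t1 * u = t1 * t4 * q ^ s₂) (hu' : t1 / u = t1 * t3 * q ^ s₃) :
    askeyWilson q n u t1 t2 t3 t4 = 0 := by
  have hqn : q ^ (-(n : ℤ)) * q ^ n = 1 := by
    rw [← zpow_natCast, ← zpow_add₀ hq, neg_add_cancel, zpow_zero]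
  have hvanish := sum_qpoch_mul_prod_qpoch_mul_pow_div_qpoch_eq_zero univ
    ![t1 * t2, t1 * t4, t1 * t3] ![s₁, s₂, s₃] (by simpa [Fin.sum_univ_three] using hs) hqq
    (fun i _ => by fin_cases i; exacts [h12, h14, h13]) hqn
  simp only [Fin.prod_univ_three, Matrix.cons_val_zero, Matrix.cons_val_one, Matrix.cons_val_two,
    Matrix.head_cons, Matrix.tail_cons] at hvanish
  unfold askeyWilson
  refine mul_eq_zero_of_right _ ?_
  rw [← hvanish]
  refine sum_congr rfl fun k _ => ?_
  rw [hbalanced, hu, hu']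
  ring

theorem askey_wilson_q_diophantine_zeros_general (n m j : ℕ) (hj : 1 ≤ j) (hjm : j ≤ m) (hmn : m ≤ n)
    (q t1 t2 t4 : ℂ)
    (hq : q ≠ 0) (ht4 : t4 ≠ 0)
    (hqq : ∀ k : ℕ, k ≤ n → qpoch q q k ≠ 0)
    (h12 : ∀ k : ℕ, k ≤ n → qpoch (t1 * t2) q k ≠ 0)
    (h14 : ∀ k : ℕ, k ≤ n → qpoch (t1 * t4) q k ≠ 0)
    (h13 : ∀ k : ℕ, k ≤ n → qpoch (q ^ (1 - (m : ℤ)) * t1 / t4) q k ≠ 0) :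
    askeyWilson q n (t4 * q ^ (j - 1)) t1 t2 (q ^ (1 - (m : ℤ)) / t4) t4 = 0 := by
  have ht3 : t1 * (q ^ (1 - (m : ℤ)) / t4) = q ^ (1 - (m : ℤ)) * t1 / t4 := by ring
  refine askeyWilson_eq_zero_of_eq_mul_pow (s₁ := n - m) (s₂ := j - 1) (s₃ := m - j) (by omega)
    hq hqq h12 (ht3 ▸ h13) h14 ?_ (by ring) ?_
  · have h : q ^ (1 - (m : ℤ)) * q ^ ((n : ℤ) - 1) = q ^ (n - m) := by
      rw [← zpow_natCast, ← zpow_add₀ hq]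
      congr 1
      omega
    field_simp
    linear_combination t1 * t2 * h
  · have h : q ^ (1 - (m : ℤ)) * q ^ (m - j) * q ^ (j - 1) = 1 := by
      rw [← zpow_natCast, ← zpow_natCast, ← zpow_add₀ hq, ← zpow_add₀ hq, ← zpow_zero q]
      congr 1
      omega
    field_simp
    linear_combination -t1 * h

theorem askey_wilson_q_diophantine_zeros (n m j : ℕ) (hj : 1 ≤ j) (hjm : j ≤ m) (hmn : m ≤ n)
    (q t1 t2 t4 : ℂ)
    (hq : q ≠ 0) (ht1 : t1 ≠ 0) (ht2 : t2 ≠ 0) (ht4 : t4 ≠ 0)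
    (hqq : ∀ k : ℕ, k ≤ n → qpoch q q k ≠ 0)
    (h12 : ∀ k : ℕ, k ≤ n → qpoch (t1 * t2) q k ≠ 0)
    (h14 : ∀ k : ℕ, k ≤ n → qpoch (t1 * t4) q k ≠ 0)
    (h13 : ∀ k : ℕ, k ≤ n → qpoch (q ^ (1 - (m : ℤ)) * t1 / t4) q k ≠ 0)
    (h12' : qpoch (t1 * t2) q (n - m) ≠ 0)
    (h23 : ∀ k : ℕ, k ≤ n - m → qpoch (t2 * q / t4) q k ≠ 0)
    (h24 : ∀ k : ℕ, k ≤ n - m → qpoch (q ^ m * t2 * t4) q k ≠ 0) :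
    askeyWilson q n (t4 * q ^ (j - 1)) t1 t2 (q ^ (1 - (m : ℤ)) / t4) t4 = 0 :=
  askey_wilson_q_diophantine_zeros_general n m j hj hjm hmn q t1 t2 t4 hq ht4 hqq h12 h14 h13
end
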